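/- In the automaton K_n (n > 5 odd) with state q = 0: δ(0, b a) = δ(0, a b^{n-1}); for 2 ≤ m ≤ n-3, δ(0, b^m a) = δ(0, a b^{m-2}); δ(0, b^{n-2} a b^2) = δ(0, a); and δ(0, b^{n-1} a) = δ(0, a b^{n-3}). -/

import Mathlib

open Finset

universe u v

variable {Q : Type u} {A : Type v}

/-- Extended transition function on words (lists of letters). -/
def dw (δ : Q → A → Q) (q : Q) (w : List A) : Q := w.foldl δ q

/-- A subset `S` of the state set is reachable if it is the image of the
full state set under some word. -/
def reach [Fintype Q] [DecidableEq Q] (δ : Q → A → Q) (S : Finset Q) : Prop :=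
  ∃ w : List A, Finset.univ.image (fun q => dw δ q w) = S

/-- Rank of a word: cardinality of the image of the state set under it. -/
def rkw [Fintype Q] [DecidableEq Q] (δ : Q → A → Q) (w : List A) : ℕ :=
  (Finset.univ.image (fun q => dw δ q w)).card

/-- Rank of a letter. -/
def rkl [Fintype Q] [DecidableEq Q] (δ : Q → A → Q) (a : A) : ℕ :=
  (Finset.univ.image (fun q => δ q a)).card

/-- A map is a cyclic permutation with a single orbit. -/
def isCyclicPerm (f : Q → Q) : Prop :=
  Function.Bijective f ∧ ∀ p q : Q, ∃ k : ℕ, f^[k] p = q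

/-- Two subsets of states are distinguishable in the power automaton:
some word maps exactly one of them to a singleton. -/
def distinguishable [DecidableEq Q] (δ : Q → A → Q) (S T : Finset Q) : Prop :=
  ∃ u : List A,
    Xor' ((S.image (fun q => dw δ q u)).card = 1)
         ((T.image (fun q => dw δ q u)).card = 1)

/-- The set of synchronizing words. -/
def Syn [Fintype Q] [DecidableEq Q] (δ : Q → A → Q) : Set (List A) :=
  {w | (Finset.univ.image (fun q => dw δ q w)).card = 1}

/-- The Nerode right-congruence of a language. -/
def nerode (L : Set (List A)) : Setoid (List A) where
  r u v := ∀ x : List A, u ++ x ∈ L ↔ v ++ x ∈ L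
  iseqv := ⟨fun _ _ => Iff.rfl, fun h x => (h x).symm, fun h1 h2 x => (h1 x).trans (h2 x)⟩

/-- State complexity of a language: number of Nerode classes. -/
noncomputable def sc (L : Set (List A)) : ℕ := Nat.card (Quotient (nerode L))

/-- Complete reachability. -/
def complReach [Fintype Q] [DecidableEq Q] (δ : Q → A → Q) : Prop :=
  ∀ S : Finset Q, S.Nonempty → ∃ w : List A, Finset.univ.image (fun q => dw δ q w) = S

/-- The permutation group generated by the permutational letters. -/
def permGroup [Fintype Q] [DecidableEq Q] (δ : Q → A → Q) : Subgroup (Equiv.Perm Q) :=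
  Subgroup.closure {π : Equiv.Perm Q | ∃ a : A, ∀ q : Q, π q = δ q a}

/-- The transition function of the automaton `K_n`; the letter `true` is `b`
(the cyclic permutation) and `false` is `a`. -/
def Kdelta (n : ℕ) [NeZero n] (i : Fin n) (c : Bool) : Fin n :=
  if c then i + 1
  else if i.val = 0 then ⟨3 % n, Nat.mod_lt 3 (NeZero.pos n)⟩
  else if i.val = n - 1 then ⟨0, NeZero.pos n⟩
  else if i.val = n - 2 then ⟨1 % n, Nat.mod_lt 1 (NeZero.pos n)⟩
  else i + 1

/-!
The letter `b` acts on `Fin n` as `i ↦ i + 1`, so `b^m` is translation by `m` and, since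
`(n : Fin n) = 0`, `b^(n - k)` is translation by `-k`. Each side of each equation therefore
applies `a` at most once, at a state where its action is explicit, and the equations become
identities in the ring `Fin n`.
-/

open Fin.NatCast Fin.CommRing

@[simp] lemma dw_nil (δ : Q → A → Q) (q : Q) : dw δ q [] = q := rfl

@[simp] lemma dw_cons (δ : Q → A → Q) (q : Q) (a : A) (w : List A) :
    dw δ q (a :: w) = dw δ (δ q a) w := rfl

@[simp] lemma dw_append (δ : Q → A → Q) (q : Q) (w v : List A) :
    dw δ q (w ++ v) = dw δ (dw δ q w) v :=
  List.foldl_append ..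

lemma dw_replicate (δ : Q → A → Q) (q : Q) (a : A) (m : ℕ) :
    dw δ q (List.replicate m a) = (δ · a)^[m] q := by
  induction m generalizing q with
  | zero => rfl
  | succ m ih => rw [List.replicate_succ, dw_cons, ih, Function.iterate_succ_apply]

section Kn

variable {n : ℕ} [NeZero n]

lemma Kdelta_true (q : Fin n) : Kdelta n q true = q + 1 := rfl

lemma dw_Kdelta_replicate_true (q : Fin n) (m : ℕ) :
    dw (Kdelta n) q (List.replicate m true) = q + m := by
  rw [dw_replicate, show (Kdelta n · true) = (· + 1) from rfl, add_right_iterate_apply,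
    nsmul_one]

lemma Kdelta_zero_false : Kdelta n 0 false = 3 := rfl

lemma Kdelta_natCast_false {i : ℕ} (hi : 1 ≤ i) (hin : i ≤ n - 3) :
    Kdelta n i false = i + 1 := by
  have hval : (i : Fin n).val = i := Fin.val_cast_of_lt (by omega)
  simp only [Kdelta, hval, Bool.false_eq_true, if_false]
  rw [if_neg (by omega), if_neg (by omega), if_neg (by omega)]

lemma Kdelta_natCast_sub_two_false (hn : 2 < n) : Kdelta n ↑(n - 2) false = 1 := by
  have hval : ((n - 2 : ℕ) : Fin n).val = n - 2 := Fin.val_cast_of_lt (by omega)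
  ext
  simp only [Kdelta, hval, Bool.false_eq_true, if_false]
  rw [if_neg (by omega), if_neg (by omega), if_true]
  simp

lemma Kdelta_natCast_sub_one_false (hn : 1 < n) : Kdelta n ↑(n - 1) false = 0 := by
  have hval : ((n - 1 : ℕ) : Fin n).val = n - 1 := Fin.val_cast_of_lt (by omega)
  simp only [Kdelta, hval, Bool.false_eq_true, if_false]
  rw [if_neg (by omega), if_true]
  rfl

lemma Fin.natCast_self_sub {k : ℕ} (hk : k ≤ n) : ((n - k : ℕ) : Fin n) = -k := by
  rw [Nat.cast_sub hk, Fin.natCast_self, zero_sub]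

end Kn

theorem Kn_equations_general (n : ℕ) [NeZero n] (hn : 5 < n) :
    dw (Kdelta n) 0 [true, false] =
        dw (Kdelta n) 0 (false :: List.replicate (n - 1) true) ∧
    (∀ m : ℕ, 2 ≤ m → m ≤ n - 3 →
      dw (Kdelta n) 0 (List.replicate m true ++ [false]) =
        dw (Kdelta n) 0 (false :: List.replicate (m - 2) true)) ∧
    dw (Kdelta n) 0 (List.replicate (n - 2) true ++ [false] ++ List.replicate 2 true) =
        dw (Kdelta n) 0 [false] ∧
    dw (Kdelta n) 0 (List.replicate (n - 1) true ++ [false]) =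
        dw (Kdelta n) 0 (false :: List.replicate (n - 3) true) := by
  simp only [dw_append, dw_cons, dw_nil, dw_Kdelta_replicate_true, Kdelta_true, zero_add,
    Kdelta_zero_false]
  refine ⟨?_, fun m hm2 hmn => ?_, ?_, ?_⟩
  · rw [← Nat.cast_one, Kdelta_natCast_false le_rfl (by omega), Fin.natCast_self_sub (by omega)]
    ring
  · rw [Kdelta_natCast_false (by omega) hmn, Nat.cast_sub hm2]
    ring
  · rw [Kdelta_natCast_sub_two_false (by omega)]
    ring
  · rw [Kdelta_natCast_sub_one_false (by omega), Fin.natCast_self_sub (by omega)]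
    ring

theorem Kn_equations (n : ℕ) [NeZero n] (hodd : Odd n) (hn : 5 < n) :
    dw (Kdelta n) 0 [true, false] =
        dw (Kdelta n) 0 (false :: List.replicate (n - 1) true) ∧
    (∀ m : ℕ, 2 ≤ m → m ≤ n - 3 →
      dw (Kdelta n) 0 (List.replicate m true ++ [false]) =
        dw (Kdelta n) 0 (false :: List.replicate (m - 2) true)) ∧
    dw (Kdelta n) 0 (List.replicate (n - 2) true ++ [false] ++ List.replicate 2 true) =
        dw (Kdelta n) 0 [false] ∧
    dw (Kdelta n) 0 (List.replicate (n - 1) true ++ [false]) =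
        dw (Kdelta n) 0 (false :: List.replicate (n - 3) true) :=
  Kn_equations_general n hn
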